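/- Let (S,*) be a nontrivial commutative adequate partial semigroup, let r be an idempotent in J(S), let (C_n)_{n=1}^∞ be a sequence of members of r, let k ∈ ℕ, and for each l ∈ {1,...,k} let (y_{l,n})_{n=1}^∞ be an adequate sequence in S. Then there exist a sequence (a_n)_{n=1}^∞ in S and a sequence (H_n)_{n=1}^∞ in P_f(ℕ) with max H_n < min H_{n+1} for each n, such that for all l ∈ {1,...,k} and all F ∈ P_f(ℕ) with m = min F, one has ∏_{n∈F} (a_n * ∏_{t∈H_n} y_{l,t}) ∈ C_m. -/

import Mathlib

/-- A partial semigroup: `mul` is partially defined (`none` = undefined), and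
associativity holds in the strong sense: either side is defined iff the other is,
and then they agree. -/
structure PartialSemigroup (S : Type*) where
  mul : S → S → Option S
  assoc : ∀ a b c : S,
    (mul a b).bind (fun x => mul x c) = (mul b c).bind (fun y => mul a y)

namespace PartialSemigroup

variable {S : Type*} (P : PartialSemigroup S)

/-- φ(a) = {t : a*t is defined}. -/
def phi (a : S) : Set S := {t | (P.mul a t).isSome}

/-- σ(H) = ⋂_{s ∈ H} φ(s). -/
def sigma (H : Set S) : Set S := ⋂ s ∈ H, P.phi s

/-- a⁻¹A = {t ∈ φ(a) : a*t ∈ A}. -/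
def invImg (a : S) (A : Set S) : Set S :=
  {t | ∃ v, P.mul a t = some v ∧ v ∈ A}

/-- An adequate partial semigroup: σ(H) ≠ ∅ for every finite nonempty H. -/
def Adequate : Prop :=
  ∀ H : Finset S, H.Nonempty → (P.sigma ↑H).Nonempty

/-- δS: ultrafilters containing every φ(x). -/
def mem_delta (q : Ultrafilter S) : Prop := ∀ x : S, P.phi x ∈ q

/-- Product of a nonempty list, associated to the left; `none` if empty or undefined. -/
def listProd : List S → Option S
  | [] => none
  | a :: l => l.foldl (fun acc b => acc.bind (fun x => P.mul x b)) (some a)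

/-- ∏_{t ∈ H} f(t) in increasing order of indices. -/
def finProd (f : ℕ → S) (H : Finset ℕ) : Option S :=
  P.listProd ((H.sort (· ≤ ·)).map f)

/-- Product of a list of partially defined elements. -/
def optProd : List (Option S) → Option S
  | [] => none
  | o :: l => l.foldl (fun acc b => acc.bind (fun x => b.bind (fun y => P.mul x y))) o

/-- An adequate sequence. -/
def AdequateSeq (f : ℕ → S) : Prop :=
  (∀ H : Finset ℕ, H.Nonempty → (P.finProd f H).isSome) ∧
  (∀ F : Finset S, F.Nonempty → ∃ m : ℕ,
    ∀ H : Finset ℕ, H.Nonempty → (∀ n ∈ H, m ≤ n) →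
      ∀ v, P.finProd f H = some v → v ∈ P.sigma ↑F)

/-- The interleaved product (∏_{i=1}^m a(i)*f(t(i)))*a(m+1). -/
def jProd {m : ℕ} (a : Fin (m + 1) → S) (t : Fin m → ℕ) (f : ℕ → S) : Option S :=
  P.listProd
    ((((List.finRange m).map (fun i => [a i.castSucc, f (t i)])).flatten) ++ [a (Fin.last m)])

/-- J-sets. -/
def IsJSet (A : Set S) : Prop :=
  ∀ F : Finset (ℕ → S), F.Nonempty → (∀ f ∈ F, P.AdequateSeq f) →
    ∀ L : Finset S, L.Nonempty →
      ∃ m : ℕ, 0 < m ∧ ∃ a : Fin (m + 1) → S, ∃ t : Fin m → ℕ, StrictMono t ∧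
        ∀ f ∈ F, ∃ v, P.jProd a t f = some v ∧ v ∈ A ∩ P.sigma ↑L

end PartialSemigroup

namespace PartialSemigroup
variable {S : Type*} (P : PartialSemigroup S)

/-- A syndetic subset of a partial semigroup. -/
def Syndetic (A : Set S) : Prop :=
  ∃ H : Finset S, H.Nonempty ∧ P.sigma ↑H ⊆ ⋃ t ∈ H, P.invImg t A

end PartialSemigroup

namespace PartialSemigroup
variable {S : Type*} (P : PartialSemigroup S)

/-- `I` is a (two-sided) ideal of `δS` (with respect to the operation `star`). -/
def IsIdeal (star : {q : Ultrafilter S // P.mem_delta q} → {q : Ultrafilter S // P.mem_delta q} →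
      {q : Ultrafilter S // P.mem_delta q})
    (I : Set {q : Ultrafilter S // P.mem_delta q}) : Prop :=
  I.Nonempty ∧ ∀ p ∈ I, ∀ q, star p q ∈ I ∧ star q p ∈ I

/-- `K` is the smallest (two-sided) ideal of `δS`. -/
def IsSmallestIdeal (star : {q : Ultrafilter S // P.mem_delta q} →
      {q : Ultrafilter S // P.mem_delta q} → {q : Ultrafilter S // P.mem_delta q})
    (K : Set {q : Ultrafilter S // P.mem_delta q}) : Prop :=
  P.IsIdeal star K ∧ ∀ I, P.IsIdeal star I → K ⊆ I

end PartialSemigroup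

/-!
The blocks `(a_n, H_n)` are chosen one at a time, keeping every product over a finite set `F` of
indices already chosen inside `(C m)⋆ = {x ∈ C m | x⁻¹ C m ∈ r}`, `m = min F`, rather than `C m`.
Idempotence of `r` gives `x⁻¹ A⋆ ∈ r` for `x ∈ A⋆`, so the set of admissible next factors,
`(C n)⋆` intersected with the finitely many `u⁻¹ (C m)⋆` for the products `u` built so far, lies in
`r` and is therefore a J-set. The J-set property, applied to the sequences `y_l` shifted past all
earlier blocks, yields `a(1), …, a(m+1)` and `t(1) < … < t(m)`; by commutativity the J-product
splits as `(a(1) ⋯ a(m+1)) * ∏ y_l(t(i) + N)`, which is the next block.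
-/

theorem exists_forall_of_forall_exists_update {X : Type*} (Q : ℕ → (ℕ → X) → Prop)
    (hQ : ∀ n f g, (∀ i < n, f i = g i) → Q n f → Q n g) {f₀ : ℕ → X} (h₀ : Q 0 f₀)
    (hstep : ∀ n f, Q n f → ∃ x, Q (n + 1) (Function.update f n x)) :
    ∃ f : ℕ → X, ∀ n, Q n f := by
  have : Nonempty X := ⟨f₀ 0⟩
  choose! next hnext using hstep
  let seq : ℕ → ℕ → X := fun n => Nat.rec f₀ (fun n f => Function.update f n (next n f)) n
  have hseq : ∀ n, Q n (seq n) := by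
    intro n
    induction n with
    | zero => exact h₀
    | succ n ih => exact hnext n _ ih
  have hstable : ∀ n, ∀ i < n, seq n i = seq (i + 1) i := by
    intro n
    induction n with
    | zero => exact fun i hi => absurd hi (Nat.not_lt_zero i)
    | succ n ih =>
      intro i hi
      rcases Nat.lt_succ_iff_lt_or_eq.mp hi with hi | rfl
      · exact (Function.update_of_ne hi.ne _ _).trans (ih i hi)
      · rfl
  exact ⟨fun i => seq (i + 1) i, fun n => hQ n _ _ (hstable n) (hseq n)⟩

namespace PartialSemigroup

variable {S : Type*} (P : PartialSemigroup S)

def optMul (x y : Option S) : Option S := x.bind fun a => y.bind (P.mul a)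

lemma optMul_assoc (x y z : Option S) : P.optMul (P.optMul x y) z = P.optMul x (P.optMul y z) := by
  rcases x with _ | a <;> rcases y with _ | b <;> rcases z with _ | c
  all_goals simp only [optMul, Option.bind_none, Option.bind_some, Option.bind_fun_none]
  exact P.assoc a b c

lemma optMul_comm (hcomm : ∀ a b : S, P.mul a b = P.mul b a) (x y : Option S) :
    P.optMul x y = P.optMul y x := by
  rcases x with _ | a <;> rcases y with _ | b <;> simp [optMul, hcomm]

lemma optProd_cons (o : Option S) (l : List (Option S)) :
    P.optProd (o :: l) = l.foldl P.optMul o := rfl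

lemma foldl_optMul_optMul (l : List (Option S)) (x y : Option S) :
    l.foldl P.optMul (P.optMul x y) = P.optMul x (l.foldl P.optMul y) := by
  induction l generalizing y with
  | nil => rfl
  | cons z l ih => simp only [List.foldl_cons, optMul_assoc, ih]

lemma optProd_append {l₁ l₂ : List (Option S)} (h₁ : l₁ ≠ []) (h₂ : l₂ ≠ []) :
    P.optProd (l₁ ++ l₂) = P.optMul (P.optProd l₁) (P.optProd l₂) := by
  obtain ⟨o₁, l₁, rfl⟩ := List.exists_cons_of_ne_nil h₁
  obtain ⟨o₂, l₂, rfl⟩ := List.exists_cons_of_ne_nil h₂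
  simp only [optProd_cons, List.cons_append, List.foldl_append, List.foldl_cons,
    foldl_optMul_optMul]

lemma optProd_perm (hcomm : ∀ a b : S, P.mul a b = P.mul b a) {l₁ l₂ : List (Option S)}
    (h : l₁.Perm l₂) : P.optProd l₁ = P.optProd l₂ := by
  have : RightCommutative P.optMul :=
    ⟨fun x y z => by rw [optMul_assoc, optMul_assoc, P.optMul_comm hcomm y z]⟩
  induction h with
  | nil => rfl
  | cons o h => simp only [optProd_cons, h.foldl_eq o]
  | swap o₁ o₂ l => simp only [optProd_cons, List.foldl_cons, P.optMul_comm hcomm o₁ o₂]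
  | trans _ _ ih₁ ih₂ => exact ih₁.trans ih₂

lemma listProd_eq_optProd (l : List S) : P.listProd l = P.optProd (l.map some) := by
  cases l with
  | nil => rfl
  | cons a l => simp only [listProd, List.map_cons, optProd_cons, List.foldl_map]; rfl

lemma jProd_eq_optMul (hcomm : ∀ a b : S, P.mul a b = P.mul b a) {m : ℕ} (hm : 0 < m)
    (a : Fin (m + 1) → S) (t : Fin m → ℕ) (f : ℕ → S) :
    P.jProd a t f =
      P.optMul (P.listProd ((List.finRange m).map (fun i => a i.castSucc) ++ [a (Fin.last m)]))
        (P.listProd ((List.finRange m).map (f ∘ t))) := by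
  have hperm : (((List.finRange m).map fun i => [a i.castSucc, f (t i)]).flatten
      ++ [a (Fin.last m)]).Perm
      (((List.finRange m).map (fun i => a i.castSucc) ++ [a (Fin.last m)])
        ++ (List.finRange m).map (f ∘ t)) := by
    rw [← List.flatMap_def, List.append_assoc, List.map_eq_flatMap (f := f ∘ t)]
    refine ((List.map_append_flatMap_perm _ _ _).symm.append_right _).trans ?_
    rw [List.append_assoc]
    exact List.perm_append_comm.append_left _
  have hne : (List.finRange m).map (f ∘ t) ≠ [] := by simp [hm.ne']
  rw [jProd, listProd_eq_optProd, P.optProd_perm hcomm (hperm.map some), List.map_append,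
    P.optProd_append (by simp) (by simpa using hne), ← listProd_eq_optProd,
    ← listProd_eq_optProd]

lemma finProd_map {ι : Type*} [LinearOrder ι] (f : ℕ → S) (e : ι ↪ ℕ) (he : StrictMono e)
    (s : Finset ι) : P.finProd f (s.map e) = P.listProd ((s.sort (· ≤ ·)).map (f ∘ e)) := by
  rw [finProd, ← (he.strictMonoOn _).map_finsetSort, List.map_map]

lemma AdequateSeq.comp_add_right {f : ℕ → S} (hf : P.AdequateSeq f) (N : ℕ) :
    P.AdequateSeq (fun s => f (s + N)) := by
  have hshift : ∀ H, P.finProd (fun s => f (s + N)) H = P.finProd f (H.map (addRightEmbedding N)) :=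
    fun H => (P.finProd_map f (addRightEmbedding N) (fun _ _ h => Nat.add_lt_add_right h N) H).symm
  refine ⟨fun H hH => hshift H ▸ hf.1 _ (hH.map), fun F hF => ?_⟩
  obtain ⟨m, hm⟩ := hf.2 F hF
  refine ⟨m, fun H hH hge v hv => hm _ hH.map ?_ v (hshift H ▸ hv)⟩
  simp only [Finset.mem_map, addRightEmbedding_apply, forall_exists_index, and_imp]
  rintro _ n hn rfl
  exact (hge n hn).trans (Nat.le_add_right n N)

section StarSet

variable (r : Ultrafilter S)

def starSet (A : Set S) : Set S := A ∩ {a | P.invImg a A ∈ r}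

lemma starSet_subset (A : Set S) : P.starSet r A ⊆ A := fun _ ha => ha.1

lemma starSet_mem (hidem : ∀ A : Set S, A ∈ r ↔ {a : S | P.invImg a A ∈ r} ∈ r)
    {A : Set S} (hA : A ∈ r) : P.starSet r A ∈ r :=
  Filter.inter_mem hA ((hidem A).mp hA)

lemma invImg_inter (a : S) (A B : Set S) :
    P.invImg a (A ∩ B) = P.invImg a A ∩ P.invImg a B := by
  ext t
  constructor
  · rintro ⟨v, hv, hA, hB⟩
    exact ⟨⟨v, hv, hA⟩, ⟨v, hv, hB⟩⟩
  · rintro ⟨⟨v, hv, hA⟩, ⟨w, hw, hB⟩⟩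
    obtain rfl : v = w := Option.some_injective _ (hv.symm.trans hw)
    exact ⟨v, hv, hA, hB⟩

lemma invImg_starSet_mem (hrδ : P.mem_delta r)
    (hidem : ∀ A : Set S, A ∈ r ↔ {a : S | P.invImg a A ∈ r} ∈ r)
    {A : Set S} {a : S} (ha : a ∈ P.starSet r A) : P.invImg a (P.starSet r A) ∈ r := by
  have hsub : {t | P.invImg t (P.invImg a A) ∈ r} ∩ P.phi a ⊆
      P.invImg a {b | P.invImg b A ∈ r} := by
    rintro t ⟨ht, hφ⟩
    obtain ⟨w, hw⟩ := Option.isSome_iff_exists.mp hφ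
    refine ⟨w, hw, Filter.mem_of_superset ht ?_⟩
    rintro u ⟨x, hx, z, hz, hzA⟩
    have hassoc := P.assoc a t u
    rw [hw, hx, Option.bind_some, Option.bind_some] at hassoc
    exact ⟨z, hassoc.trans hz, hzA⟩
  rw [starSet, P.invImg_inter]
  exact Filter.inter_mem ha.2
    (Filter.mem_of_superset (Filter.inter_mem ((hidem _).mp ha.2) (hrδ a)) hsub)

end StarSet

lemma IsJSet.exists_mul_finProd_mem (hcomm : ∀ a b : S, P.mul a b = P.mul b a)
    {ι : Type*} [Finite ι] {A : Set S} (hA : P.IsJSet A) (hAne : A.Nonempty)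
    {y : ι → ℕ → S} (hy : ∀ l, P.AdequateSeq (y l)) (N : ℕ) :
    ∃ α : S, ∃ H : Finset ℕ, H.Nonempty ∧ (∀ q ∈ H, N ≤ q) ∧
      ∀ l, ∃ v, (P.finProd (y l) H).bind (P.mul α) = some v ∧ v ∈ A := by
  rcases isEmpty_or_nonempty ι with hι | ⟨⟨l₀⟩⟩
  · obtain ⟨α, -⟩ := hAne
    exact ⟨α, {N}, Finset.singleton_nonempty N, by simp, isEmptyElim⟩
  classical
  have := Fintype.ofFinite ι
  obtain ⟨m, hm, a, t, ht, hprod⟩ := hA (Finset.univ.image fun l s => y l (s + N))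
    ⟨_, Finset.mem_image_of_mem _ (Finset.mem_univ l₀)⟩
    (by simpa using fun l => AdequateSeq.comp_add_right P (hy l) N)
    {y l₀ 0} (Finset.singleton_nonempty _)
  choose v hv using fun l => hprod _ (Finset.mem_image_of_mem _ (Finset.mem_univ l))
  set as := (List.finRange m).map (fun i => a i.castSucc) ++ [a (Fin.last m)]
  obtain ⟨α, hα⟩ : ∃ α, P.listProd as = some α := by
    refine Option.ne_none_iff_exists'.mp fun h => ?_
    have := (hv l₀).1
    rw [P.jProd_eq_optMul hcomm hm, h] at this
    exact Option.some_ne_none _ this.symm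
  let e : Fin m ↪ ℕ := ⟨fun i => t i + N, fun i j h => ht.injective (Nat.add_right_cancel h)⟩
  have he : StrictMono e := fun i j h => Nat.add_lt_add_right (ht h) N
  refine ⟨α, Finset.univ.map e, ⟨e ⟨0, hm⟩, Finset.mem_map_of_mem _ (Finset.mem_univ _)⟩,
    fun q hq => ?_, fun l => ⟨v l, ?_, (hv l).2.1⟩⟩
  · obtain ⟨i, -, rfl⟩ := Finset.mem_map.mp hq
    exact Nat.le_add_left N (t i)
  · rw [P.finProd_map _ e he, Fin.sort_univ, ← (hv l).1, P.jProd_eq_optMul hcomm hm, hα]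
    rfl

section Blocks

variable (r : Ultrafilter S) (C : ℕ → Set S) {ι : Type*} (y : ι → ℕ → S)

-- With `g n = (a_n, H_n)` this is `∏_{n ∈ F} (a_n * ∏_{t ∈ H_n} f t)`.
def blockProd (g : ℕ → S × Finset ℕ) (f : ℕ → S) (F : Finset ℕ) : Option S :=
  P.optProd ((F.sort (· ≤ ·)).map fun n => (P.finProd f (g n).2).bind (P.mul (g n).1))

lemma blockProd_congr {g g' : ℕ → S × Finset ℕ} {F : Finset ℕ} (h : ∀ i ∈ F, g i = g' i)
    (f : ℕ → S) : P.blockProd g f F = P.blockProd g' f F := by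
  rw [blockProd, blockProd, List.map_congr_left fun i hi => by rw [h i ((F.mem_sort _).mp hi)]]

lemma blockProd_singleton (g : ℕ → S × Finset ℕ) (f : ℕ → S) (n : ℕ) :
    P.blockProd g f {n} = (P.finProd f (g n).2).bind (P.mul (g n).1) := by
  rw [blockProd, Finset.sort_singleton]
  rfl

lemma blockProd_insert_of_forall_lt (g : ℕ → S × Finset ℕ) (f : ℕ → S) {F : Finset ℕ}
    (hF : F.Nonempty) {n : ℕ} (hlt : ∀ i ∈ F, i < n) :
    P.blockProd g f (insert n F) =
      P.optMul (P.blockProd g f F) ((P.finProd f (g n).2).bind (P.mul (g n).1)) := by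
  have hsort : (insert n F).sort (· ≤ ·) = F.sort (· ≤ ·) ++ [n] := by
    refine (Finset.sortedLT_sort _).eq_of_mem_iff (List.Pairwise.sortedLT ?_) (by simp [or_comm])
    refine List.pairwise_append.2 ⟨(Finset.sortedLT_sort F).pairwise, List.pairwise_singleton _ _,
      fun i hi j hj => ?_⟩
    rw [List.mem_singleton.mp hj]
    exact hlt i ((F.mem_sort _).mp hi)
  rw [blockProd, hsort, List.map_append, P.optProd_append
    (by simpa [← List.length_pos_iff] using hF.card_pos) (by simp)]
  rfl

structure IsStarPrefix (n : ℕ) (g : ℕ → S × Finset ℕ) : Prop where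
  nonempty : ∀ i < n, (g i).2.Nonempty
  lt_succ : ∀ i, i + 1 < n → ∀ p ∈ (g i).2, ∀ q ∈ (g (i + 1)).2, p < q
  blockProd_mem : ∀ l, ∀ F ⊆ Finset.range n, ∀ hF : F.Nonempty,
    ∃ v, P.blockProd g (y l) F = some v ∧ v ∈ P.starSet r (C (F.min' hF))

variable {P r C y}

lemma isStarPrefix_zero (g : ℕ → S × Finset ℕ) : P.IsStarPrefix r C y 0 g where
  nonempty _ h := absurd h (Nat.not_lt_zero _)
  lt_succ _ h := absurd h (Nat.not_lt_zero _)
  blockProd_mem _ F hF hne := by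
    obtain rfl := Finset.subset_empty.mp (Finset.range_zero ▸ hF)
    exact absurd hne Finset.not_nonempty_empty

lemma IsStarPrefix.congr {n : ℕ} {g g' : ℕ → S × Finset ℕ} (h : P.IsStarPrefix r C y n g)
    (hg : ∀ i < n, g i = g' i) : P.IsStarPrefix r C y n g' where
  nonempty i hi := hg i hi ▸ h.nonempty i hi
  lt_succ i hi := hg i (by omega) ▸ hg (i + 1) hi ▸ h.lt_succ i hi
  blockProd_mem l F hF hne := by
    rw [← P.blockProd_congr fun i hi => hg i (Finset.mem_range.mp (hF hi))]
    exact h.blockProd_mem l F hF hne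

lemma IsStarPrefix.eventually_mem_starSet_invImg (hrδ : P.mem_delta r)
    (hidem : ∀ A : Set S, A ∈ r ↔ {a : S | P.invImg a A ∈ r} ∈ r) (hC : ∀ n, C n ∈ r)
    [Finite ι] {n : ℕ} {g : ℕ → S × Finset ℕ} (h : P.IsStarPrefix r C y n g) :
    ∀ᶠ x in (r : Filter S), x ∈ P.starSet r (C n) ∧
      ∀ l, ∀ F ∈ (Finset.range n).powerset, ∀ hF : F.Nonempty, ∀ u,
        P.blockProd g (y l) F = some u → x ∈ P.invImg u (P.starSet r (C (F.min' hF))) := by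
  refine Filter.Eventually.and (P.starSet_mem r hidem (hC n)) ?_
  refine Filter.eventually_all.2 fun l => (Filter.eventually_all_finset _).2 fun F hF => ?_
  rw [Finset.mem_powerset] at hF
  rcases F.eq_empty_or_nonempty with rfl | hne
  · simp
  obtain ⟨u, hu, hmem⟩ := h.blockProd_mem l F hF hne
  filter_upwards [P.invImg_starSet_mem r hrδ hidem hmem] with x hx _ u' hu'
  rwa [← Option.some_inj.mp (hu.symm.trans hu')]

lemma IsStarPrefix.blockProd_update_mem {n : ℕ} {g : ℕ → S × Finset ℕ}
    (h : P.IsStarPrefix r C y n g) {x : S × Finset ℕ} {l : ι} {v : S}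
    (hv : (P.finProd (y l) x.2).bind (P.mul x.1) = some v) (hvC : v ∈ P.starSet r (C n))
    (hvinv : ∀ F ∈ (Finset.range n).powerset, ∀ hF : F.Nonempty, ∀ u,
      P.blockProd g (y l) F = some u → v ∈ P.invImg u (P.starSet r (C (F.min' hF))))
    {F : Finset ℕ} (hF : F ⊆ Finset.range (n + 1)) (hne : F.Nonempty) :
    ∃ v, P.blockProd (Function.update g n x) (y l) F = some v ∧
      v ∈ P.starSet r (C (F.min' hne)) := by
  have hupd : ∀ F' ⊆ Finset.range n,
      P.blockProd (Function.update g n x) (y l) F' = P.blockProd g (y l) F' := fun F' hF' =>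
    P.blockProd_congr (fun i hi => Function.update_of_ne (Finset.mem_range.mp (hF' hi)).ne _ _) _
  by_cases hn : n ∈ F
  swap
  · have hF' : F ⊆ Finset.range n := fun i hi => Finset.mem_range.mpr <|
      (Finset.mem_range_succ_iff.mp (hF hi)).lt_of_ne (ne_of_mem_of_not_mem hi hn)
    rw [hupd F hF']
    exact h.blockProd_mem l F hF' hne
  obtain ⟨F', hF', rfl⟩ : ∃ F' ⊆ Finset.range n, F = insert n F' := by
    refine ⟨F.erase n, fun i hi => ?_, (Finset.insert_erase hn).symm⟩
    obtain ⟨hin, hiF⟩ := Finset.mem_erase.mp hi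
    exact Finset.mem_range.mpr ((Finset.mem_range_succ_iff.mp (hF hiF)).lt_of_ne hin)
  rcases F'.eq_empty_or_nonempty with rfl | hF'ne
  · simp only [insert_empty_eq, Finset.min'_singleton, P.blockProd_singleton,
      Function.update_self]
    exact ⟨v, hv, hvC⟩
  have hlt : ∀ i ∈ F', i < n := fun i hi => Finset.mem_range.mp (hF' hi)
  obtain ⟨u, hu, -⟩ := h.blockProd_mem l F' hF' hF'ne
  obtain ⟨w, hw, hwC⟩ := hvinv F' (Finset.mem_powerset.mpr hF') hF'ne u hu
  refine ⟨w, ?_, ?_⟩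
  · rw [P.blockProd_insert_of_forall_lt _ _ hF'ne hlt, hupd F' hF', hu, Function.update_self, hv]
    exact hw
  · rwa [Finset.min'_insert _ _ hF'ne, min_eq_right (hlt _ (F'.min'_mem hF'ne)).le]

lemma IsStarPrefix.exists_update (hcomm : ∀ a b : S, P.mul a b = P.mul b a)
    (hrδ : P.mem_delta r) (hrJ : ∀ A : Set S, A ∈ r → P.IsJSet A)
    (hidem : ∀ A : Set S, A ∈ r ↔ {a : S | P.invImg a A ∈ r} ∈ r) (hC : ∀ n, C n ∈ r)
    [Finite ι] (hy : ∀ l, P.AdequateSeq (y l)) {n : ℕ} {g : ℕ → S × Finset ℕ}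
    (h : P.IsStarPrefix r C y n g) : ∃ x, P.IsStarPrefix r C y (n + 1) (Function.update g n x) := by
  obtain ⟨A, hA, hAsub⟩ := (h.eventually_mem_starSet_invImg hrδ hidem hC).exists_mem
  set B := (Finset.range n).sup fun i => (g i).2.sup id
  obtain ⟨α, H, hHne, hHB, hprod⟩ :=
    (hrJ A hA).exists_mul_finProd_mem P hcomm (Filter.nonempty_of_mem hA) hy (B + 1)
  refine ⟨(α, H), ⟨fun i hi => ?_, fun i hi p hp q hq => ?_, fun l F hF hne => ?_⟩⟩
  · rcases Nat.lt_succ_iff_lt_or_eq.mp hi with hi | rfl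
    · rw [Function.update_of_ne hi.ne]
      exact h.nonempty i hi
    · rw [Function.update_self]
      exact hHne
  · rw [Function.update_of_ne (by omega : i ≠ n)] at hp
    rcases Nat.lt_succ_iff_lt_or_eq.mp hi with hi | hi
    · rw [Function.update_of_ne hi.ne] at hq
      exact h.lt_succ i hi p hp q hq
    · rw [hi, Function.update_self] at hq
      have hpB : p ≤ B := (Finset.le_sup (f := id) hp).trans
        (Finset.le_sup (f := fun i => (g i).2.sup id) (Finset.mem_range.mpr (by omega)))
      exact hpB.trans_lt (hHB q hq)
  · obtain ⟨v, hv, hvA⟩ := hprod l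
    exact h.blockProd_update_mem hv (hAsub v hvA).1 ((hAsub v hvA).2 l) hF hne

end Blocks

end PartialSemigroup

open PartialSemigroup in
theorem stmt14_general {S : Type*} (P : PartialSemigroup S)
    (hcomm : ∀ a b : S, P.mul a b = P.mul b a)
    -- `r` is an idempotent in `J(S) ⊆ δS`:
    (r : Ultrafilter S) (hrδ : P.mem_delta r)
    (hrJ : ∀ A : Set S, A ∈ r → P.IsJSet A)
    (hidem : ∀ A : Set S, A ∈ r ↔ {a : S | P.invImg a A ∈ r} ∈ r)
    (C : ℕ → Set S) (hC : ∀ n, C n ∈ r)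
    (k : ℕ) (y : Fin k → ℕ → S) (hy : ∀ l, P.AdequateSeq (y l)) :
    ∃ a : ℕ → S, ∃ H : ℕ → Finset ℕ,
      (∀ n, (H n).Nonempty) ∧
      (∀ n, ∀ i ∈ H n, ∀ j ∈ H (n + 1), i < j) ∧
      ∀ (l : Fin k) (F : Finset ℕ) (hF : F.Nonempty),
        ∃ v, P.optProd ((F.sort (· ≤ ·)).map
              (fun n => (P.finProd (y l) (H n)).bind
                (fun w => P.mul (a n) w))) = some v ∧
          v ∈ C (F.min' hF) := by
  obtain ⟨s, -⟩ := Filter.nonempty_of_mem (hC 0)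
  obtain ⟨g, hg⟩ := exists_forall_of_forall_exists_update (P.IsStarPrefix r C y)
    (fun _ _ _ hfg h => h.congr hfg) (isStarPrefix_zero fun _ => (s, ∅))
    (fun _ _ h => h.exists_update hcomm hrδ hrJ hidem hC hy)
  refine ⟨fun n => (g n).1, fun n => (g n).2, fun n => (hg (n + 1)).nonempty n n.lt_succ_self,
    fun n => (hg (n + 2)).lt_succ n (by omega), fun l F hF => ?_⟩
  obtain ⟨v, hv, hvC⟩ := (hg (F.max' hF + 1)).blockProd_mem l F
    (fun i hi => Finset.mem_range.mpr (Nat.lt_succ_of_le (F.le_max' i hi))) hF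
  exact ⟨v, hv, P.starSet_subset r _ hvC⟩

open PartialSemigroup in
/-- Corollary: Phulara-type central sets theorem for finitely many adequate
sequences in a nontrivial commutative adequate partial semigroup. -/
theorem stmt14 {S : Type*} (P : PartialSemigroup S) (hP : P.Adequate)
    (hcomm : ∀ a b : S, P.mul a b = P.mul b a) (hS : Nontrivial S)
    -- `r` is an idempotent in `J(S) ⊆ δS`:
    (r : Ultrafilter S) (hrδ : P.mem_delta r)
    (hrJ : ∀ A : Set S, A ∈ r → P.IsJSet A)
    (hidem : ∀ A : Set S, A ∈ r ↔ {a : S | P.invImg a A ∈ r} ∈ r)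
    (C : ℕ → Set S) (hC : ∀ n, C n ∈ r)
    (k : ℕ) (y : Fin k → ℕ → S) (hy : ∀ l, P.AdequateSeq (y l)) :
    ∃ a : ℕ → S, ∃ H : ℕ → Finset ℕ,
      (∀ n, (H n).Nonempty) ∧
      (∀ n, ∀ i ∈ H n, ∀ j ∈ H (n + 1), i < j) ∧
      ∀ (l : Fin k) (F : Finset ℕ) (hF : F.Nonempty),
        ∃ v, P.optProd ((F.sort (· ≤ ·)).map
              (fun n => (P.finProd (y l) (H n)).bind
                (fun w => P.mul (a n) w))) = some v ∧
          v ∈ C (F.min' hF) :=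
  stmt14_general P hcomm r hrδ hrJ hidem C hC k y hy
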